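/- Let Q be the discrete Heisenberg group, with presentation Q = ⟨a, b | [a,[a,b]] = 1, [b,[a,b]] = 1⟩, equipped with the word metric associated to the generating set {a, b}, and let q = [a,b] = aba⁻¹b⁻¹. Then the element q is distorted in Q, with distortion function √n: there exists C ≥ 1 such that (1/C)·√n ≤ |qⁿ| ≤ C·√n for every n ≥ 1. -/

import Mathlib

open Set Pointwise
open scoped commutatorElement

variable {G : Type*} [Group G]

/-- The word length of `g` with respect to a generating set `S`:
the least `n` such that `g` is a product of `n` elements of `S ∪ S⁻¹`. -/
noncomputable def wordLength (S : Set G) (g : G) : ℕ :=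
  sInf {n : ℕ | ∃ l : List G, l.length = n ∧ (∀ x ∈ l, x ∈ S ∪ S⁻¹) ∧ l.prod = g}

/-- The word metric associated to a generating set `S`, as a real number. -/
noncomputable def wordDist (S : Set G) (g h : G) : ℝ :=
  (wordLength S (g⁻¹ * h) : ℝ)

/-- The conjugacy norm of (the conjugacy class of) `g`: the minimal word length
of an element conjugate to `g`. -/
noncomputable def conjNorm (S : Set G) (g : G) : ℕ :=
  sInf {n : ℕ | ∃ x : G, n = wordLength S (x * g * x⁻¹)}

/-- The Lipschitz pseudo-metric, computed on automorphisms (it only depends on the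
outer classes): `d_Lip(φ₁, φ₂) = ln sup_c ‖φ₂⁻¹(c)‖ / ‖φ₁⁻¹(c)‖`, the supremum being
over all non-trivial conjugacy classes `c`. -/
noncomputable def dLipAut (S : Set G) (φ₁ φ₂ : MulAut G) : ℝ :=
  Real.log (sSup {r : ℝ | ∃ g : G, g ≠ 1 ∧
    r = (conjNorm S (φ₂⁻¹ g) : ℝ) / (conjNorm S (φ₁⁻¹ g) : ℝ)})

instance : ((MulAut.conj : G →* MulAut G).range).Normal := by
  constructor
  rintro x ⟨g, rfl⟩ ψ
  refine ⟨ψ g, ?_⟩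
  ext y
  simp [MulAut.conj, mul_assoc]

/-- The outer automorphism group `Out(G) = Aut(G)/Inn(G)`. -/
abbrev OutGroup (G : Type*) [Group G] :=
  MulAut G ⧸ (MulAut.conj : G →* MulAut G).range

/-- The Lipschitz pseudo-metric on `Out(G)`; it is computed using any
representatives of the outer classes (the value does not depend on this choice,
whence the infimum). -/
noncomputable def dLipOut (S : Set G) (Φ₁ Φ₂ : OutGroup G) : ℝ :=
  sInf {d : ℝ | ∃ φ₁ φ₂ : MulAut G, (φ₁ : OutGroup G) = Φ₁ ∧ (φ₂ : OutGroup G) = Φ₂ ∧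
    d = dLipAut S φ₁ φ₂}

/-- Gromov hyperbolicity (four-point condition) for the word metric of `(G, S)`. -/
def IsHyperbolic (S : Set G) : Prop :=
  ∃ δ : ℝ, 0 ≤ δ ∧ ∀ x y z w : G,
    wordDist S x z + wordDist S y w ≤
      max (wordDist S x y + wordDist S z w) (wordDist S x w + wordDist S y z) + 2 * δ

/-- A group is virtually cyclic if it has a cyclic subgroup of finite index;
a group is *non-elementary* if it is not virtually cyclic. -/
def IsVirtuallyCyclic (G : Type*) [Group G] : Prop :=
  ∃ H : Subgroup G, H.FiniteIndex ∧ IsCyclic H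

/-- A length function on a group `H`. -/
structure IsLengthFunction {H : Type*} [Group H] (L : H → ℕ) : Prop where
  eq_zero_iff : ∀ h : H, L h = 0 ↔ h = 1
  inv_eq : ∀ h : H, L h⁻¹ = L h
  subadd : ∀ h₁ h₂ : H, L (h₁ * h₂) ≤ L h₁ + L h₂
  growth : ∃ lam : ℝ, 0 < lam ∧ ∀ r : ℕ, ∃ t : Finset H,
    {h : H | L h ≤ r} ⊆ ↑t ∧ (t.card : ℝ) ≤ lam ^ r

/-- A length function on the (additive) group `ℤ`. -/
structure IsLengthFunctionZ (L : ℤ → ℕ) : Prop where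
  eq_zero_iff : ∀ n : ℤ, L n = 0 ↔ n = 0
  neg_eq : ∀ n : ℤ, L (-n) = L n
  subadd : ∀ m n : ℤ, L (m + n) ≤ L m + L n
  growth : ∃ lam : ℝ, 0 < lam ∧ ∀ r : ℕ, ∃ t : Finset ℤ,
    {n : ℤ | L n ≤ r} ⊆ ↑t ∧ (t.card : ℝ) ≤ lam ^ r

/-- `f₁ ≺ f₂` for functions on `ℤ`. -/
def PrecZ (f₁ f₂ : ℤ → ℝ) : Prop := ∃ C : ℝ, 0 < C ∧ ∀ n : ℤ, f₁ n ≤ C * f₂ n + C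

/-- `f₁ ≍ f₂` (equivalence of growth) for functions on `ℤ`. -/
def EquivZ (f₁ f₂ : ℤ → ℝ) : Prop := PrecZ f₁ f₂ ∧ PrecZ f₂ f₁

/-- `f₁ ≺ f₂` for functions on `ℕ`. -/
def PrecN (f₁ f₂ : ℕ → ℝ) : Prop := ∃ C : ℝ, 0 < C ∧ ∀ n : ℕ, f₁ n ≤ C * f₂ n + C

/-- `f₁ ≍ f₂` (equivalence of growth) for functions on `ℕ`. -/
def EquivN (f₁ f₂ : ℕ → ℝ) : Prop := PrecN f₁ f₂ ∧ PrecN f₂ f₁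

/-- A group is finitely presented if it is isomorphic to the quotient of a
finitely generated free group by the normal closure of finitely many relators. -/
def FinitelyPresented (Q : Type*) [Group Q] : Prop :=
  ∃ (n : ℕ) (rels : Finset (FreeGroup (Fin n))),
    Nonempty (PresentedGroup (↑rels : Set (FreeGroup (Fin n))) ≃* Q)

/-- A geodesic from `x` to `y` in a metric space, recorded as its image `s`. -/
def IsGeodesicFrom {X : Type*} [MetricSpace X] (s : Set X) (x y : X) : Prop :=
  ∃ γ : ℝ → X, γ 0 = x ∧ γ (dist x y) = y ∧
    (∀ u ∈ Set.Icc (0:ℝ) (dist x y), ∀ v ∈ Set.Icc (0:ℝ) (dist x y),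
      dist (γ u) (γ v) = |u - v|) ∧
    s = γ '' Set.Icc (0:ℝ) (dist x y)

/-- A geodesic metric space: any two points are joined by a geodesic. -/
def GeodesicSpace (X : Type*) [MetricSpace X] : Prop :=
  ∀ x y : X, ∃ s : Set X, IsGeodesicFrom s x y

/-- All geodesic triangles are `δ`-thin: each side lies in the `δ`-neighborhood of
the union of the other two sides. -/
def ThinTriangles (X : Type*) [MetricSpace X] (δ : ℝ) : Prop :=
  ∀ x y z : X, ∀ s₁ s₂ s₃ : Set X,
    IsGeodesicFrom s₁ x y → IsGeodesicFrom s₂ y z → IsGeodesicFrom s₃ x z →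
    ∀ p ∈ s₃, ∃ q ∈ s₁ ∪ s₂, dist p q ≤ δ

/-!
The commutator `q = ⁅a, b⁆` is central in `Q`, so `⁅aᵏ, bᵏ⁆ = q^(k²)`; writing `n = k² + r`
with `k = ⌊√n⌋` and `r ≤ 2k` gives a word of length at most `4k + 4r ≤ 12k` for `qⁿ`.
Conversely `Q` maps onto the integral Heisenberg group `ℤ³` sending `qⁿ` to `(0, 0, n)`, and
a product of `ℓ` generators `(±1, 0, 0)`, `(0, ±1, 0)` there has last coordinate at most `ℓ²`
in absolute value, so `|qⁿ| ≥ √n`.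
-/

section WordLength

variable {G H : Type*} [Group G] [Group H] {S : Set G} {g h : G}

lemma wordLength_prod_le_length {l : List G} (hl : ∀ x ∈ l, x ∈ S ∪ S⁻¹) :
    wordLength S l.prod ≤ l.length :=
  Nat.sInf_le ⟨l, rfl, hl, rfl⟩

lemma wordLength_le_one_of_mem (hg : g ∈ S) : wordLength S g ≤ 1 := by
  simpa using wordLength_prod_le_length (l := [g]) (by simp [hg])

lemma exists_list_length_eq_wordLength (hg : g ∈ Subgroup.closure S) :
    ∃ l : List G, l.length = wordLength S g ∧ (∀ x ∈ l, x ∈ S ∪ S⁻¹) ∧ l.prod = g := by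
  rw [← Subgroup.mem_toSubmonoid, Subgroup.closure_toSubmonoid] at hg
  obtain ⟨l, hl, rfl⟩ := Submonoid.exists_list_of_mem_closure hg
  have hwords : {n : ℕ | ∃ l' : List G, l'.length = n ∧ (∀ x ∈ l', x ∈ S ∪ S⁻¹) ∧
      l'.prod = l.prod}.Nonempty := ⟨l.length, l, rfl, hl, rfl⟩
  exact Nat.sInf_mem hwords

lemma wordLength_mul_le (hg : g ∈ Subgroup.closure S) (hh : h ∈ Subgroup.closure S) :
    wordLength S (g * h) ≤ wordLength S g + wordLength S h := by
  obtain ⟨l, hl_len, hl, rfl⟩ := exists_list_length_eq_wordLength hg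
  obtain ⟨m, hm_len, hm, rfl⟩ := exists_list_length_eq_wordLength hh
  rw [← hl_len, ← hm_len, ← List.length_append, ← List.prod_append]
  exact wordLength_prod_le_length fun x hx => (List.mem_append.mp hx).elim (hl x) (hm x)

lemma wordLength_inv_le (hg : g ∈ Subgroup.closure S) : wordLength S g⁻¹ ≤ wordLength S g := by
  obtain ⟨l, hl_len, hl, rfl⟩ := exists_list_length_eq_wordLength hg
  have hl_inv : ∀ x ∈ (l.map (·⁻¹)).reverse, x ∈ S ∪ S⁻¹ := by
    simp only [List.mem_reverse, List.mem_map]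
    rintro _ ⟨x, hx, rfl⟩
    rcases hl x hx with hxS | hxS
    · exact Or.inr (by simpa using hxS)
    · exact Or.inl hxS
  simpa [hl_len, List.prod_inv_reverse] using wordLength_prod_le_length hl_inv

lemma wordLength_pow_le (hg : g ∈ Subgroup.closure S) (n : ℕ) :
    wordLength S (g ^ n) ≤ n * wordLength S g := by
  induction n with
  | zero => simpa using wordLength_prod_le_length (S := S) (l := []) (by simp)
  | succ n ih =>
    calc wordLength S (g ^ (n + 1)) ≤ wordLength S (g ^ n) + wordLength S g := by
          rw [pow_succ]; exact wordLength_mul_le (Subgroup.pow_mem _ hg n) hg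
      _ ≤ (n + 1) * wordLength S g := by rw [add_mul, one_mul]; gcongr

lemma wordLength_commutatorElement_le (hg : g ∈ Subgroup.closure S)
    (hh : h ∈ Subgroup.closure S) :
    wordLength S ⁅g, h⁆ ≤ 2 * (wordLength S g + wordLength S h) := by
  have hgh : g * h ∈ Subgroup.closure S := mul_mem hg hh
  have hghg : g * h * g⁻¹ ∈ Subgroup.closure S := mul_mem hgh (inv_mem hg)
  rw [commutatorElement_def]
  linarith [wordLength_mul_le hghg (inv_mem hh), wordLength_mul_le hgh (inv_mem hg),
    wordLength_mul_le hg hh, wordLength_inv_le hg, wordLength_inv_le hh]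

lemma wordLength_map_le (φ : G →* H) (hg : g ∈ Subgroup.closure S) :
    wordLength (φ '' S) (φ g) ≤ wordLength S g := by
  obtain ⟨l, hl_len, hl, rfl⟩ := exists_list_length_eq_wordLength hg
  have hl_map : ∀ y ∈ l.map φ, y ∈ φ '' S ∪ (φ '' S)⁻¹ := by
    simp only [List.mem_map]
    rintro _ ⟨x, hx, rfl⟩
    rcases hl x hx with hxS | hxS
    · exact Or.inl ⟨x, hxS, rfl⟩
    · exact Or.inr ⟨x⁻¹, hxS, map_inv φ x⟩
  simpa [hl_len, map_list_prod] using wordLength_prod_le_length hl_map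

end WordLength

section Commutator

variable {G : Type*} [Group G] {a b : G}

lemma commutatorElement_mem {K : Subgroup G} (ha : a ∈ K) (hb : b ∈ K) : ⁅a, b⁆ ∈ K := by
  rw [commutatorElement_def]
  exact mul_mem (mul_mem (mul_mem ha hb) (inv_mem ha)) (inv_mem hb)

lemma commutatorElement_pow_right (hb : Commute ⁅a, b⁆ b) (n : ℕ) :
    ⁅a, b ^ n⁆ = ⁅a, b⁆ ^ n := by
  have hconj : a * b * a⁻¹ = ⁅a, b⁆ * b := by rw [commutatorElement_def]; group
  rw [commutatorElement_def, ← conj_pow, hconj, hb.mul_pow, mul_inv_cancel_right]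

lemma commutatorElement_pow_left (ha : Commute ⁅a, b⁆ a) (m : ℕ) :
    ⁅a ^ m, b⁆ = ⁅a, b⁆ ^ m := by
  have ha' : Commute ⁅b, a⁆ a := by simpa [commutatorElement_inv] using ha.inv_left
  rw [← commutatorElement_inv, commutatorElement_pow_right ha', ← commutatorElement_inv, inv_pow,
    inv_inv]

lemma commutatorElement_pow_pow (ha : Commute ⁅a, b⁆ a) (hb : Commute ⁅a, b⁆ b) (m n : ℕ) :
    ⁅a ^ m, b ^ n⁆ = ⁅a, b⁆ ^ (m * n) := by
  have ha' : Commute ⁅a, b ^ n⁆ a := by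
    rw [commutatorElement_pow_right hb]; exact ha.pow_left n
  rw [commutatorElement_pow_left ha', commutatorElement_pow_right hb, ← pow_mul, mul_comm]

variable {S : Set G}

lemma wordLength_commutatorElement_pow_le (ha : a ∈ S) (hb : b ∈ S)
    (hca : Commute ⁅a, b⁆ a) (hcb : Commute ⁅a, b⁆ b) (n : ℕ) :
    wordLength S (⁅a, b⁆ ^ n) ≤ 12 * Nat.sqrt n := by
  set k := Nat.sqrt n
  have ha' : a ∈ Subgroup.closure S := Subgroup.subset_closure ha
  have hb' : b ∈ Subgroup.closure S := Subgroup.subset_closure hb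
  have hc : ⁅a, b⁆ ∈ Subgroup.closure S := commutatorElement_mem ha' hb'
  have hk_le : k * k ≤ n := Nat.sqrt_le n
  have hk_lt : n < (k + 1) * (k + 1) := Nat.lt_succ_sqrt n
  have hsplit : ⁅a, b⁆ ^ n = ⁅a ^ k, b ^ k⁆ * ⁅a, b⁆ ^ (n - k * k) := by
    rw [commutatorElement_pow_pow hca hcb, ← pow_add, Nat.add_sub_cancel' hk_le]
  have hlen_a : wordLength S (a ^ k) ≤ k := (wordLength_pow_le ha' k).trans
    (by simpa using Nat.mul_le_mul_left k (wordLength_le_one_of_mem ha))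
  have hlen_b : wordLength S (b ^ k) ≤ k := (wordLength_pow_le hb' k).trans
    (by simpa using Nat.mul_le_mul_left k (wordLength_le_one_of_mem hb))
  have hlen_c : wordLength S ⁅a, b⁆ ≤ 4 := by
    linarith [wordLength_commutatorElement_le ha' hb', wordLength_le_one_of_mem ha,
      wordLength_le_one_of_mem hb]
  have hlen_cr : wordLength S (⁅a, b⁆ ^ (n - k * k)) ≤ (n - k * k) * 4 :=
    (wordLength_pow_le hc _).trans (Nat.mul_le_mul_left _ hlen_c)
  have hlen_comm := wordLength_commutatorElement_le (Subgroup.pow_mem _ ha' k)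
    (Subgroup.pow_mem _ hb' k)
  have hlen_mul := wordLength_mul_le
    (commutatorElement_mem (Subgroup.pow_mem _ ha' k) (Subgroup.pow_mem _ hb' k))
    (Subgroup.pow_mem _ hc (n - k * k))
  have hr : n - k * k ≤ 2 * k := by rw [add_mul_self_eq] at hk_lt; omega
  rw [hsplit]
  omega

end Commutator

/-- `⟨x, y, z⟩` stands for the unitriangular matrix `[[1, x, z], [0, 1, y], [0, 0, 1]]`. -/
@[ext]
structure Heis where
  x : ℤ
  y : ℤ
  z : ℤ

namespace Heis

instance : Mul Heis := ⟨fun p q => ⟨p.x + q.x, p.y + q.y, p.z + q.z + p.x * q.y⟩⟩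
instance : One Heis := ⟨⟨0, 0, 0⟩⟩
instance : Inv Heis := ⟨fun p => ⟨-p.x, -p.y, -p.z + p.x * p.y⟩⟩

@[simp] lemma mul_def (p q : Heis) :
    p * q = ⟨p.x + q.x, p.y + q.y, p.z + q.z + p.x * q.y⟩ := rfl
@[simp] lemma one_def : (1 : Heis) = ⟨0, 0, 0⟩ := rfl
@[simp] lemma inv_def (p : Heis) : p⁻¹ = ⟨-p.x, -p.y, -p.z + p.x * p.y⟩ := rfl

instance : Group Heis where
  mul_assoc p q r := by ext <;> simp only [mul_def] <;> ring
  one_mul p := by ext <;> simp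
  mul_one p := by ext <;> simp
  inv_mul_cancel p := by ext <;> simp only [mul_def, inv_def, one_def] <;> ring

def X : Heis := ⟨1, 0, 0⟩
def Y : Heis := ⟨0, 1, 0⟩

lemma commutatorElement_X_Y_pow (n : ℕ) : ⁅X, Y⁆ ^ n = ⟨0, 0, n⟩ := by
  induction n with
  | zero => rfl
  | succ n ih => rw [pow_succ, ih]; ext <;> simp [commutatorElement_def, X, Y]

lemma abs_y_le_and_abs_z_le_of_prod (l : List Heis)
    (hl : ∀ p ∈ l, p.z = 0 ∧ |p.x| ≤ 1 ∧ |p.y| ≤ 1) :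
    |l.prod.y| ≤ l.length ∧ |l.prod.z| ≤ (l.length : ℤ) ^ 2 := by
  induction l with
  | nil => simp
  | cons p l ih =>
    obtain ⟨hy, hz⟩ := ih fun q hq => hl q (List.mem_cons_of_mem p hq)
    obtain ⟨hpz, hpx, hpy⟩ := hl p List.mem_cons_self
    have hxy : |p.x * l.prod.y| ≤ l.length := by
      rw [abs_mul]; nlinarith [abs_nonneg p.x, abs_nonneg l.prod.y]
    simp only [List.prod_cons, mul_def, hpz, zero_add, List.length_cons, Nat.cast_succ]
    constructor
    · linarith [abs_add_le p.y l.prod.y]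
    · nlinarith [abs_add_le l.prod.z (p.x * l.prod.y)]

lemma abs_z_le_wordLength_sq {p : Heis} (hp : p ∈ Subgroup.closure {X, Y}) :
    |p.z| ≤ (wordLength {X, Y} p : ℤ) ^ 2 := by
  obtain ⟨l, hl_len, hl, rfl⟩ := exists_list_length_eq_wordLength hp
  rw [← hl_len]
  refine (abs_y_le_and_abs_z_le_of_prod l fun q hq => ?_).2
  have hq' := hl q hq
  rw [Set.inv_insert, Set.inv_singleton] at hq'
  rcases hq' with (rfl | rfl) | (rfl | rfl) <;> simp [X, Y]

lemma le_wordLength_commutatorElement_pow_sq {G : Type*} [Group G] (φ : G →* Heis) {a b : G}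
    (ha : φ a = X) (hb : φ b = Y) (n : ℕ) : n ≤ wordLength {a, b} (⁅a, b⁆ ^ n) ^ 2 := by
  have hmem : ⁅a, b⁆ ^ n ∈ Subgroup.closure {a, b} :=
    Subgroup.pow_mem _ (commutatorElement_mem (Subgroup.subset_closure (by simp))
      (Subgroup.subset_closure (by simp))) n
  have himage : φ '' {a, b} = {X, Y} := by rw [Set.image_pair, ha, hb]
  have hφ : φ (⁅a, b⁆ ^ n) = ⟨0, 0, n⟩ := by
    rw [map_pow, map_commutatorElement, ha, hb, commutatorElement_X_Y_pow]
  have hz := abs_z_le_wordLength_sq (p := φ (⁅a, b⁆ ^ n)) <| by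
    rw [← himage, ← MonoidHom.map_closure]
    exact Subgroup.mem_map_of_mem φ hmem
  have hmap := wordLength_map_le φ hmem
  rw [himage, hφ] at hmap
  rw [hφ] at hz
  have hn : n ≤ wordLength {X, Y} (⟨0, 0, n⟩ : Heis) ^ 2 := by zify; simpa using hz
  exact hn.trans (by gcongr)

end Heis

lemma PresentedGroup.commute_mk_of_commutatorElement_mem {α : Type*} {rels : Set (FreeGroup α)}
    {u v : FreeGroup α} (h : ⁅u, v⁆ ∈ rels) :
    Commute (PresentedGroup.mk rels u) (PresentedGroup.mk rels v) := by
  rw [← commutatorElement_eq_one_iff_commute, ← map_commutatorElement]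
  exact PresentedGroup.one_of_mem h

/-- In the discrete Heisenberg group
`Q = ⟨a, b ∣ [a,[a,b]] = 1, [b,[a,b]] = 1⟩` with generating set `{a, b}`,
the commutator `q = [a,b]` is distorted with distortion `√n`:
`(1/C)·√n ≤ |qⁿ| ≤ C·√n` for some `C ≥ 1` and all `n ≥ 1`. -/
theorem heisenberg_commutator_distortion
    (rels : Set (FreeGroup (Fin 2)))
    (hrels : rels = {⁅FreeGroup.of (0 : Fin 2),
                       ⁅FreeGroup.of (0 : Fin 2), FreeGroup.of (1 : Fin 2)⁆⁆,
                     ⁅FreeGroup.of (1 : Fin 2),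
                       ⁅FreeGroup.of (0 : Fin 2), FreeGroup.of (1 : Fin 2)⁆⁆}) :
    ∃ C : ℝ, 1 ≤ C ∧ ∀ n : ℕ, 1 ≤ n →
      (1 / C) * Real.sqrt n ≤
          (wordLength
            ({PresentedGroup.of (rels := rels) (0 : Fin 2),
              PresentedGroup.of (rels := rels) (1 : Fin 2)} :
                Set (PresentedGroup rels))
            (⁅PresentedGroup.of (rels := rels) (0 : Fin 2),
              PresentedGroup.of (rels := rels) (1 : Fin 2)⁆ ^ n) : ℝ) ∧
        (wordLength
            ({PresentedGroup.of (rels := rels) (0 : Fin 2),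
              PresentedGroup.of (rels := rels) (1 : Fin 2)} :
                Set (PresentedGroup rels))
            (⁅PresentedGroup.of (rels := rels) (0 : Fin 2),
              PresentedGroup.of (rels := rels) (1 : Fin 2)⁆ ^ n) : ℝ) ≤
          C * Real.sqrt n := by
  set a : PresentedGroup rels := PresentedGroup.of 0
  set b : PresentedGroup rels := PresentedGroup.of 1
  have hrel₀ : ⁅FreeGroup.of (0 : Fin 2), ⁅FreeGroup.of (0 : Fin 2), FreeGroup.of (1 : Fin 2)⁆⁆
      ∈ rels := by simp [hrels]
  have hrel₁ : ⁅FreeGroup.of (1 : Fin 2), ⁅FreeGroup.of (0 : Fin 2), FreeGroup.of (1 : Fin 2)⁆⁆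
      ∈ rels := by simp [hrels]
  have hca : Commute ⁅a, b⁆ a := (PresentedGroup.commute_mk_of_commutatorElement_mem hrel₀).symm
  have hcb : Commute ⁅a, b⁆ b := (PresentedGroup.commute_mk_of_commutatorElement_mem hrel₁).symm
  have hlift : ∀ r ∈ rels, FreeGroup.lift ![Heis.X, Heis.Y] r = 1 := by
    subst hrels
    rintro r (rfl | rfl) <;> ext <;> simp [commutatorElement_def, Heis.X, Heis.Y]
  have hupper := wordLength_commutatorElement_pow_le (S := {a, b}) (by simp) (by simp) hca hcb
  have hlower := Heis.le_wordLength_commutatorElement_pow_sq (PresentedGroup.toGroup hlift)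
    (a := a) (b := b) (by simp [a, PresentedGroup.toGroup.of])
    (by simp [b, PresentedGroup.toGroup.of])
  refine ⟨12, by norm_num, fun n _ => ⟨?_, ?_⟩⟩
  · have hsqrt : √(n : ℝ) ≤ wordLength {a, b} (⁅a, b⁆ ^ n) :=
      (Real.sqrt_le_left (Nat.cast_nonneg _)).mpr (by exact_mod_cast hlower n)
    linarith [Real.sqrt_nonneg (n : ℝ)]
  · calc (wordLength {a, b} (⁅a, b⁆ ^ n) : ℝ) ≤ 12 * Nat.sqrt n := by exact_mod_cast hupper n
      _ ≤ 12 * √(n : ℝ) := by gcongr; exact Real.nat_sqrt_le_real_sqrt
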